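/- Let X and Y be nonempty compact metrizable spaces and let p₁ : X × Y → X be the projection onto the first factor. Then the induced map I(p₁) : I(X × Y) → I(X), defined by I(p₁)(μ)(φ) = μ(φ ∘ p₁) for φ ∈ C(X), is soft: for every paracompact Hausdorff topological space Z, every closed subset A ⊆ Z, and all continuous maps φ : A → I(X × Y) and ψ : Z → I(X) with I(p₁) ∘ φ = ψ restricted to A, there exists a continuous map Φ : Z → I(X × Y) such that I(p₁) ∘ Φ = ψ and Φ restricted to A equals φ. -/

import Mathlib

/-- An idempotent (Maslov) probability measure on a topological space `X` is a functional
`μ : C(X, ℝ) → ℝ` that is normalized on constants, shifts under addition of constants, and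
turns pointwise maxima into maxima. -/
def IsIdemMeasure {X : Type*} [TopologicalSpace X] (μ : C(X, ℝ) → ℝ) : Prop :=
  (∀ c : ℝ, μ (ContinuousMap.const X c) = c) ∧
  (∀ (c : ℝ) (φ : C(X, ℝ)), μ (ContinuousMap.const X c + φ) = c + μ φ) ∧
  (∀ φ ψ : C(X, ℝ), μ (φ ⊔ ψ) = max (μ φ) (μ ψ))

/-- The space `I(X)` of idempotent probability measures on `X`; as a subtype of the product
`(C(X, ℝ) → ℝ)` it automatically carries the weak* (pointwise convergence) topology. -/
abbrev IdemMeasure (X : Type*) [TopologicalSpace X] :=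
  {μ : C(X, ℝ) → ℝ // IsIdemMeasure μ}

/-- The pushforward `I(f) : I(X) → I(Y)` of functionals along a continuous map `f : X → Y`,
`I(f)(μ)(φ) = μ(φ ∘ f)`. -/
def pushF {X Y : Type*} [TopologicalSpace X] [TopologicalSpace Y] (f : C(X, Y))
    (μ : C(X, ℝ) → ℝ) : C(Y, ℝ) → ℝ :=
  fun φ => μ (φ.comp f)

/-!
An idempotent measure `μ` on `X × Y` can be rebuilt from its marginal `ν` up to `ε` on finitely
many test functions as `f ↦ ν (T f)`, where `T f x = sup_y (f (x, y) + w x y)` and `w` is a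
conditional density of `μ`, mollified in `x` by steep cones so that `T f` is continuous. Since
`T` is max-plus linear and fixes the functions of `x` alone, `ν ↦ ν ∘ T` is a continuous
section of `I(p₁)` over all of `I(X)`. Near each point of `A` such a section approximates `φ`;
elsewhere we keep the current lift of `ψ`. These local lifts are glued by a max-plus convex
combination along a bump covering of `Z`, the fibrewise maximum `ν (x ↦ max_y f (x, y))` serving
as a common upper bound which keeps the combination locally finite. Iterating with tolerance
`2⁻ⁿ` on the first `n` terms of a dense sequence of test functions gives lifts converging
uniformly on `Z`; their limit is the required extension.
-/

open ContinuousMap Filter Topology Set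

namespace IsIdemMeasure

variable {K : Type*} [TopologicalSpace K] {μ : C(K, ℝ) → ℝ}

theorem map_const (hμ : IsIdemMeasure μ) (c : ℝ) : μ (const K c) = c := hμ.1 c

theorem map_const_add (hμ : IsIdemMeasure μ) (c : ℝ) (f : C(K, ℝ)) :
    μ (const K c + f) = c + μ f := hμ.2.1 c f

theorem map_add_const (hμ : IsIdemMeasure μ) (f : C(K, ℝ)) (c : ℝ) :
    μ (f + const K c) = μ f + c := by
  rw [add_comm, hμ.map_const_add, add_comm]

theorem map_sup (hμ : IsIdemMeasure μ) (f g : C(K, ℝ)) : μ (f ⊔ g) = max (μ f) (μ g) :=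
  hμ.2.2 f g

theorem mono (hμ : IsIdemMeasure μ) : Monotone μ := fun f g h => by
  rw [← sup_eq_right.2 h, hμ.map_sup]
  exact le_max_left _ _

theorem nonempty (hμ : IsIdemMeasure μ) : Nonempty K := by
  by_contra hK
  rw [not_nonempty_iff] at hK
  have h := hμ.map_const 0
  rw [Subsingleton.elim (const K (0 : ℝ)) (const K 1), hμ.map_const] at h
  exact one_ne_zero h

section Compact

variable [CompactSpace K]

theorem le_add_norm_sub (hμ : IsIdemMeasure μ) (f g : C(K, ℝ)) :
    μ f ≤ μ g + ‖f - g‖ := by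
  have h : f ≤ g + const K ‖f - g‖ := le_def.2 fun x => by
    have := (f - g).apply_le_norm x
    simp only [coe_sub, Pi.sub_apply] at this
    simp only [coe_add, Pi.add_apply, const_apply]
    linarith
  simpa only [hμ.map_add_const] using hμ.mono h

theorem abs_sub_le_norm_sub (hμ : IsIdemMeasure μ) (f g : C(K, ℝ)) :
    |μ f - μ g| ≤ ‖f - g‖ := by
  have h₁ := hμ.le_add_norm_sub f g
  have h₂ := hμ.le_add_norm_sub g f
  rw [norm_sub_rev] at h₂
  exact abs_sub_le_iff.2 ⟨by linarith, by linarith⟩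

theorem abs_le_norm (hμ : IsIdemMeasure μ) (f : C(K, ℝ)) : |μ f| ≤ ‖f‖ := by
  have h0 : μ 0 = 0 := hμ.map_const 0
  simpa [h0] using hμ.abs_sub_le_norm_sub f 0

theorem continuous (hμ : IsIdemMeasure μ) : Continuous μ :=
  LipschitzWith.continuous (K := 1) <| LipschitzWith.of_dist_le_mul fun f g => by
    simpa [Real.dist_eq, dist_eq_norm] using hμ.abs_sub_le_norm_sub f g

theorem ext_of_denseRange {ν : C(K, ℝ) → ℝ} (hμ : IsIdemMeasure μ) (hν : IsIdemMeasure ν)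
    {F : ℕ → C(K, ℝ)} (hF : DenseRange F) (h : ∀ m, μ (F m) = ν (F m)) : μ = ν :=
  funext fun f => congrFun (hF.equalizer hμ.continuous hν.continuous (funext h)) f

theorem exists_dirac_le (hμ : IsIdemMeasure μ) (f : C(K, ℝ)) {ε : ℝ} (hε : 0 < ε) :
    ∃ p, ∀ F : C(K, ℝ), μ f - ε - f p + F p ≤ μ F := by
  by_contra! hF
  choose F hF using hF
  set G : K → C(K, ℝ) := fun p => F p + const K (μ f - μ (F p))
  have hμG : ∀ p, μ (G p) = μ f := fun p => by simp only [G, hμ.map_add_const]; ring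
  have hGp : ∀ p, f p + ε < G p p := fun p => by
    have := hF p
    simp only [G, coe_add, Pi.add_apply, const_apply]
    linarith
  -- Finitely many `G p`, all with `μ (G p) = μ f`, have a supremum above `f + ε / 2`.
  obtain ⟨t, ht⟩ := isCompact_univ.elim_finite_subcover (fun p => {q | f q + ε / 2 < G p q})
    (fun p => isOpen_lt (by fun_prop) (G p).continuous)
    (fun q _ => mem_iUnion.2 ⟨q, show f q + ε / 2 < G q q by linarith [hGp q]⟩)
  obtain ⟨p₀⟩ := hμ.nonempty
  obtain ⟨-, ⟨p₁, rfl⟩, -, ⟨hp₁, -⟩, -⟩ := ht (mem_univ p₀)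
  have htne : t.Nonempty := ⟨p₁, hp₁⟩
  have hle : f + const K (ε / 2) ≤ t.sup' htne G := le_def.2 fun q => by
    obtain ⟨-, ⟨p, rfl⟩, -, ⟨hp, rfl⟩, hq : f q + ε / 2 < G p q⟩ := ht (mem_univ q)
    have := le_def.1 (Finset.le_sup' G hp) q
    simp only [coe_add, Pi.add_apply, const_apply]
    linarith
  have hsup : μ (t.sup' htne G) = μ f := by
    rw [Finset.apply_sup'_eq_sup'_comp htne μ hμ.map_sup]
    simp only [Function.comp_def, hμG, Finset.sup'_const]
  have := hμ.mono hle
  rw [hμ.map_add_const, hsup] at this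
  linarith

end Compact

end IsIdemMeasure

theorem isIdemMeasure_pushF {K L : Type*} [TopologicalSpace K] [TopologicalSpace L]
    (π : C(K, L)) {μ : C(K, ℝ) → ℝ} (hμ : IsIdemMeasure μ) :
    IsIdemMeasure (pushF π μ) :=
  ⟨fun c => hμ.map_const c, fun c f => hμ.map_const_add c (f.comp π),
    fun f g => hμ.map_sup (f.comp π) (g.comp π)⟩

theorem isIdemMeasure_of_tendsto {K ι : Type*} [TopologicalSpace K] {l : Filter ι} [l.NeBot]
    {μs : ι → C(K, ℝ) → ℝ} {μ : C(K, ℝ) → ℝ} (hμs : ∀ n, IsIdemMeasure (μs n))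
    (h : ∀ f, Tendsto (fun n => μs n f) l (𝓝 (μ f))) : IsIdemMeasure μ := by
  refine ⟨fun c => ?_, fun c f => ?_, fun f g => ?_⟩
  · exact tendsto_nhds_unique (h _)
      (tendsto_const_nhds.congr fun n => ((hμs n).map_const c).symm)
  · exact tendsto_nhds_unique (h _)
      (by simpa only [fun n => (hμs n).map_const_add c f] using (h f).const_add c)
  · exact tendsto_nhds_unique (h _)
      (by simpa only [fun n => (hμs n).map_sup f g] using (h f).max (h g))

theorem continuous_idemMeasure_iff {K Z : Type*} [TopologicalSpace K] [TopologicalSpace Z]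
    {Φ : Z → IdemMeasure K} : Continuous Φ ↔ ∀ f, Continuous fun z => (Φ z).val f :=
  continuous_induced_rng.trans continuous_pi_iff

section FiberSup

variable {X Y : Type*} [TopologicalSpace X] [TopologicalSpace Y] {w : X → Y → ℝ}

/-- When `w` is a conditional density of a measure `μ` on `X × Y` over its marginal `ν`,
`f ↦ ν (fiberSup w f)` recovers `μ`. -/
noncomputable def fiberSup (w : X → Y → ℝ) (f : C(X × Y, ℝ)) (x : X) : ℝ :=
  ⨆ y, f (x, y) + w x y

theorem fiberSup_comp_fst [Nonempty Y] (hw : ∀ x y, w x y ≤ 0) (hw₀ : ∀ x, ⨆ y, w x y = 0)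
    (g : C(X, ℝ)) (x : X) : fiberSup w (g.comp fst) x = g x := by
  have hbdd : BddAbove (range (w x)) := ⟨0, by rintro _ ⟨y, rfl⟩; exact hw x y⟩
  show ⨆ y, g x + w x y = g x
  rw [← add_ciSup hbdd, hw₀, add_zero]

variable [CompactSpace Y]

theorem bddAbove_range_fiberSup (hw : ∀ x y, w x y ≤ 0) (f : C(X × Y, ℝ)) (x : X) :
    BddAbove (range fun y => f (x, y) + w x y) :=
  ⟨‖f.curry x‖, by
    rintro _ ⟨y, rfl⟩
    linarith [(f.curry x).apply_le_norm y, hw x y, f.curry_apply x y]⟩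

theorem le_fiberSup (hw : ∀ x y, w x y ≤ 0) (f : C(X × Y, ℝ)) (x : X) (y : Y) :
    f (x, y) + w x y ≤ fiberSup w f x :=
  le_ciSup (bddAbove_range_fiberSup hw f x) y

theorem fiberSup_sup (hw : ∀ x y, w x y ≤ 0) (f g : C(X × Y, ℝ)) (x : X) :
    fiberSup w (f ⊔ g) x = max (fiberSup w f x) (fiberSup w g x) := by
  simp only [fiberSup, coe_sup, Pi.sup_apply, ← max_add_add_right]
  exact ciSup_sup_eq (bddAbove_range_fiberSup hw f x) (bddAbove_range_fiberSup hw g x)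

variable [Nonempty Y]

theorem fiberSup_const_add (hw : ∀ x y, w x y ≤ 0) (c : ℝ) (f : C(X × Y, ℝ)) (x : X) :
    fiberSup w (const _ c + f) x = c + fiberSup w f x := by
  simp only [fiberSup, coe_add, Pi.add_apply, const_apply, add_assoc]
  exact (add_ciSup (bddAbove_range_fiberSup hw f x) c).symm

theorem fiberSup_le_add (hw : ∀ x y, w x y ≤ 0) (f : C(X × Y, ℝ)) {x x' : X} {η : ℝ}
    (h : ∀ y, f (x, y) + w x y ≤ f (x', y) + w x' y + η) :
    fiberSup w f x ≤ fiberSup w f x' + η :=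
  ciSup_le fun y => by linarith [h y, le_fiberSup hw f x' y]

end FiberSup

section MaxPlusKernel

variable {X Y : Type*} [TopologicalSpace X] [TopologicalSpace Y]

structure IsMaxPlusKernel (T : C(X × Y, ℝ) → C(X, ℝ)) : Prop where
  map_const_add : ∀ (c : ℝ) f, T (const _ c + f) = const X c + T f
  map_sup : ∀ f g, T (f ⊔ g) = T f ⊔ T g
  map_comp_fst : ∀ g : C(X, ℝ), T (g.comp fst) = g

namespace IsMaxPlusKernel

variable {T : C(X × Y, ℝ) → C(X, ℝ)}

theorem isIdemMeasure_comp (hT : IsMaxPlusKernel T) {ν : C(X, ℝ) → ℝ}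
    (hν : IsIdemMeasure ν) : IsIdemMeasure fun f => ν (T f) := by
  refine ⟨fun c => ?_, fun c f => ?_, fun f g => ?_⟩ <;> dsimp only
  · rw [← const_comp c (fst : C(X × Y, X)), hT.map_comp_fst, hν.map_const]
  · rw [hT.map_const_add, hν.map_const_add]
  · rw [hT.map_sup, hν.map_sup]

theorem pushF_fst_comp (hT : IsMaxPlusKernel T) (ν : C(X, ℝ) → ℝ) :
    pushF fst (fun f => ν (T f)) = ν :=
  funext fun g => congrArg ν (hT.map_comp_fst g)

end IsMaxPlusKernel

theorem isMaxPlusKernel_fiberSup [CompactSpace Y] [Nonempty Y] {w : X → Y → ℝ}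
    (hw : ∀ x y, w x y ≤ 0) (hw₀ : ∀ x, ⨆ y, w x y = 0)
    (hcont : ∀ f, Continuous (fiberSup w f)) :
    IsMaxPlusKernel fun f => ⟨fiberSup w f, hcont f⟩ where
  map_const_add c f := ext (fiberSup_const_add hw c f)
  map_sup f g := ext (fiberSup_sup hw f g)
  map_comp_fst g := ext (fiberSup_comp_fst hw hw₀ g)

end MaxPlusKernel

section FiberMax

variable {X Y : Type*} [PseudoMetricSpace X] [TopologicalSpace Y] [CompactSpace Y] [Nonempty Y]

theorem continuous_fiberSup {w : X → Y → ℝ} (hw : ∀ x y, w x y ≤ 0) {L : ℝ}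
    (hL : ∀ x x' y, w x y ≤ w x' y + L * dist x x') (f : C(X × Y, ℝ)) :
    Continuous (fiberSup w f) := by
  have hmod : ∀ x x', dist (fiberSup w f x) (fiberSup w f x') ≤
      dist (f.curry x) (f.curry x') + L * dist x x' := fun x x' => by
    have hf : ∀ y, |f (x, y) - f (x', y)| ≤ dist (f.curry x) (f.curry x') := fun y => by
      simpa only [curry_apply, Real.dist_eq] using
        (f.curry x).dist_apply_le_dist (g := f.curry x') y
    rw [Real.dist_eq, abs_sub_le_iff]
    constructor
    · have := fiberSup_le_add hw f (x := x) (x' := x')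
        (η := dist (f.curry x) (f.curry x') + L * dist x x') fun y => by
          linarith [(abs_sub_le_iff.1 (hf y)).1, hL x x' y]
      linarith
    · have := fiberSup_le_add hw f (x := x') (x' := x)
        (η := dist (f.curry x) (f.curry x') + L * dist x x') fun y => by
          linarith [(abs_sub_le_iff.1 (hf y)).2, dist_comm x' x ▸ hL x' x y]
      linarith
  refine continuous_iff_continuousAt.2 fun x => tendsto_iff_dist_tendsto_zero.2 ?_
  refine squeeze_zero (fun _ => dist_nonneg) (fun x' => hmod x' x) ?_
  have hcont : Continuous fun x' => dist (f.curry x') (f.curry x) + L * dist x' x := by fun_prop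
  simpa using hcont.tendsto x

noncomputable def fiberMax (f : C(X × Y, ℝ)) : C(X, ℝ) :=
  ⟨fiberSup (fun _ _ => 0) f, continuous_fiberSup (fun _ _ => le_rfl) (L := 0) (by simp) f⟩

theorem isMaxPlusKernel_fiberMax : IsMaxPlusKernel (fiberMax (X := X) (Y := Y)) :=
  isMaxPlusKernel_fiberSup (fun _ _ => le_rfl) (fun _ => ciSup_const) _

theorem le_fiberMax_comp_fst (f : C(X × Y, ℝ)) : f ≤ (fiberMax f).comp fst :=
  le_def.2 fun p => show f p ≤ fiberSup (fun _ _ => 0) f p.1 by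
    simpa using le_fiberSup (fun _ _ => le_rfl) f p.1 p.2

theorem IsIdemMeasure.le_fiberMax {μ : C(X × Y, ℝ) → ℝ} {ν : C(X, ℝ) → ℝ}
    (hμ : IsIdemMeasure μ) (hμν : pushF fst μ = ν) (f : C(X × Y, ℝ)) :
    μ f ≤ ν (fiberMax f) :=
  (hμ.mono (le_fiberMax_comp_fst f)).trans_eq (congrFun hμν _)

end FiberMax

section Cone

variable {X : Type*} [PseudoMetricSpace X]

def cone (k : ℝ) (x : X) : C(X, ℝ) := ⟨fun u => -(k * dist u x), by fun_prop⟩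

@[simp] theorem cone_apply (k : ℝ) (x u : X) : cone k x u = -(k * dist u x) := rfl

theorem cone_nonpos {k : ℝ} (hk : 0 ≤ k) (x : X) : cone k x ≤ 0 :=
  le_def.2 fun u => by simpa using mul_nonneg hk dist_nonneg

theorem cone_le_cone_add {k : ℝ} (hk : 0 ≤ k) (x x' : X) :
    cone k x ≤ cone k x' + const X (k * dist x x') :=
  le_def.2 fun u => by
    have := mul_le_mul_of_nonneg_left (dist_triangle u x x') hk
    simp only [coe_add, Pi.add_apply, cone_apply, const_apply]
    linarith

namespace IsIdemMeasure

variable {ν : C(X, ℝ) → ℝ}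

theorem map_cone_nonpos (hν : IsIdemMeasure ν) {k : ℝ} (hk : 0 ≤ k) (x : X) :
    ν (cone k x) ≤ 0 :=
  (hν.mono (cone_nonpos hk x)).trans_eq (hν.map_const 0)

theorem map_cone_le_add (hν : IsIdemMeasure ν) {k : ℝ} (hk : 0 ≤ k) (x x' : X) :
    ν (cone k x) ≤ ν (cone k x') + k * dist x x' :=
  (hν.mono (cone_le_cone_add hk x x')).trans_eq (hν.map_add_const _ _)

/-- Steep cones at `x` recover the density `inf_g (ν g - g x)` of `ν` at `x`. -/
theorem exists_map_cone_le [CompactSpace X] (hν : IsIdemMeasure ν) (x : X) (g : C(X, ℝ))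
    {ε : ℝ} (hε : 0 < ε) : ∃ k₀, ∀ k ≥ k₀, ν (cone k x) ≤ ν g - g x + ε := by
  obtain ⟨δ, hδ, hg⟩ := Metric.continuousAt_iff.1 g.continuous.continuousAt ε hε
  refine ⟨2 * ‖g‖ / δ, fun k hk => ?_⟩
  have hkδ : 2 * ‖g‖ ≤ k * δ := (div_le_iff₀ hδ).1 hk
  have hk₀ : 0 ≤ k := (div_nonneg (by positivity) hδ.le).trans hk
  have hle : cone k x ≤ g + const X (ε - g x) := le_def.2 fun u => by
    simp only [cone_apply, coe_add, Pi.add_apply, const_apply]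
    rcases lt_or_ge (dist u x) δ with hu | hu
    · have := (abs_lt.1 (Real.dist_eq _ _ ▸ hg hu)).1
      linarith [mul_nonneg hk₀ (dist_nonneg (x := u) (y := x))]
    · have := mul_le_mul_of_nonneg_left hu hk₀
      linarith [g.apply_le_norm x, g.neg_norm_le_apply u]
  have := hν.mono hle
  rw [hν.map_add_const] at this
  linarith

end IsIdemMeasure

end Cone

section CondKernel

variable {X Y : Type*} [PseudoMetricSpace X] [PseudoMetricSpace Y] (μ : C(X × Y, ℝ) → ℝ)

/-- The candidate values for `condWeight μ k W x y`. A value `t` qualifies when `μ` dominates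
the Dirac mass at some `(x', y)` with weight `t + k * dist x' x + ν (cone k x)`, where `ν` is
the marginal of `μ`; the floor `-W` keeps the set nonempty. -/
def condWeightSet (k W : ℝ) (x : X) (y : Y) : Set ℝ :=
  insert (-W) {t | ∃ x', ∀ F : C(X × Y, ℝ),
    t + F (x', y) + k * dist x' x + pushF fst μ (cone k x) ≤ μ F}

/-- A conditional density of `μ` along the fibres of `fst`, mollified in `x` by cones of
slope `k` and truncated below at `-W`. -/
noncomputable def condWeight (k W : ℝ) (x : X) (y : Y) : ℝ := sSup (condWeightSet μ k W x y)

variable {μ} {k W : ℝ}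

theorem le_zero_of_mem_condWeightSet (hW : 0 ≤ W) {x : X} {y : Y}
    {t : ℝ} (ht : t ∈ condWeightSet μ k W x y) : t ≤ 0 := by
  rcases ht with rfl | ⟨x', hx'⟩
  · linarith
  · have := hx' ((cone k x).comp fst)
    simp only [comp_apply, fst_apply, cone_apply] at this
    linarith [show pushF fst μ (cone k x) = μ ((cone k x).comp fst) from rfl]

theorem bddAbove_condWeightSet (hW : 0 ≤ W) (x : X) (y : Y) :
    BddAbove (condWeightSet μ k W x y) :=
  ⟨0, fun _ => le_zero_of_mem_condWeightSet hW⟩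

theorem condWeight_nonpos (hW : 0 ≤ W) (x : X) (y : Y) :
    condWeight μ k W x y ≤ 0 :=
  csSup_le (insert_nonempty _ _) fun _ => le_zero_of_mem_condWeightSet hW

theorem neg_le_condWeight (hW : 0 ≤ W) (x : X) (y : Y) :
    -W ≤ condWeight μ k W x y :=
  le_csSup (bddAbove_condWeightSet hW x y) (mem_insert _ _)

theorem le_condWeight (hW : 0 ≤ W) {x : X} {y : Y} {t : ℝ} (x' : X)
    (h : ∀ F : C(X × Y, ℝ), t + F (x', y) + k * dist x' x + pushF fst μ (cone k x) ≤ μ F) :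
    t ≤ condWeight μ k W x y :=
  le_csSup (bddAbove_condWeightSet hW x y) (mem_insert_of_mem _ ⟨x', h⟩)

theorem condWeight_le_add (hμ : IsIdemMeasure μ) (hk : 0 ≤ k) (hW : 0 ≤ W) (x x' : X)
    (y : Y) : condWeight μ k W x y ≤ condWeight μ k W x' y + 2 * k * dist x x' := by
  have hd : 0 ≤ 2 * k * dist x x' := by positivity
  refine csSup_le (insert_nonempty _ _) ?_
  rintro t (rfl | ⟨x'', hx''⟩)
  · linarith [neg_le_condWeight (μ := μ) (k := k) hW x' y]
  · suffices t - 2 * k * dist x x' ≤ condWeight μ k W x' y by linarith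
    refine le_condWeight hW x'' fun F => ?_
    have h₁ := mul_le_mul_of_nonneg_left (dist_triangle x'' x x') hk
    have h₂ := (isIdemMeasure_pushF fst hμ).map_cone_le_add hk x' x
    rw [dist_comm x' x] at h₂
    linarith [hx'' F]

variable [CompactSpace X] [CompactSpace Y]

theorem exists_neg_le_condWeight (hμ : IsIdemMeasure μ) (hW : 0 ≤ W) (x : X) {ε : ℝ}
    (hε : 0 < ε) : ∃ y : Y, -ε ≤ condWeight μ k W x y := by
  obtain ⟨p, hp⟩ := hμ.exists_dirac_le ((cone k x).comp fst) hε
  refine ⟨p.2, le_condWeight hW p.1 fun F => ?_⟩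
  have := hp F
  simp only [comp_apply, fst_apply, cone_apply] at this
  have hν : pushF fst μ (cone k x) = μ ((cone k x).comp fst) := rfl
  linarith

theorem iSup_condWeight [Nonempty Y] (hμ : IsIdemMeasure μ) (hW : 0 ≤ W) (x : X) :
    ⨆ y : Y, condWeight μ k W x y = 0 := by
  have hbdd : BddAbove (range (condWeight μ k W x)) :=
    ⟨0, by rintro _ ⟨y, rfl⟩; exact condWeight_nonpos hW x y⟩
  refine le_antisymm (ciSup_le (condWeight_nonpos hW x)) (le_of_forall_pos_lt_add fun ε hε => ?_)
  obtain ⟨y, hy⟩ := exists_neg_le_condWeight (k := k) hμ hW x (half_pos hε)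
  linarith [le_ciSup hbdd y]

theorem add_condWeight_add_le (hμ : IsIdemMeasure μ) (hk : 0 ≤ k) {f : C(X × Y, ℝ)}
    {ε Δ : ℝ} (hε : 0 ≤ ε)
    (hmod : ∀ x x' y, dist x' x ≤ Δ → f (x, y) ≤ f (x', y) + ε)
    (hkΔ : 2 * ‖f‖ ≤ k * Δ) (hWf : 2 * ‖f‖ ≤ W) (x : X) (y : Y) :
    f (x, y) + condWeight μ k W x y + pushF fst μ (cone k x) ≤ μ f + ε := by
  have hc := (isIdemMeasure_pushF fst hμ).map_cone_nonpos hk x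
  have hf₁ := f.apply_le_norm (x, y)
  suffices condWeight μ k W x y ≤ μ f + ε - pushF fst μ (cone k x) - f (x, y) by linarith
  refine csSup_le (insert_nonempty _ _) ?_
  rintro t (rfl | ⟨x', hx'⟩)
  · linarith [(abs_le.1 (hμ.abs_le_norm f)).1]
  · have h := hx' f
    rcases le_or_gt (dist x' x) Δ with hd | hd
    · linarith [hmod x x' y hd, mul_nonneg hk (dist_nonneg (x := x') (y := x))]
    · linarith [mul_le_mul_of_nonneg_left hd.le hk, f.neg_norm_le_apply (x', y)]

variable [Nonempty Y]

noncomputable def condKernel (hμ : IsIdemMeasure μ) (hk : 0 ≤ k) (hW : 0 ≤ W)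
    (f : C(X × Y, ℝ)) : C(X, ℝ) :=
  ⟨fiberSup (condWeight μ k W) f,
    continuous_fiberSup (condWeight_nonpos hW) (condWeight_le_add hμ hk hW) f⟩

theorem isMaxPlusKernel_condKernel (hμ : IsIdemMeasure μ) (hk : 0 ≤ k) (hW : 0 ≤ W) :
    IsMaxPlusKernel (condKernel hμ hk hW) :=
  isMaxPlusKernel_fiberSup (condWeight_nonpos hW) (iSup_condWeight hμ hW) _

theorem pushF_condKernel_le (hμ : IsIdemMeasure μ) (hk : 0 ≤ k) (hW : 0 ≤ W)
    {f : C(X × Y, ℝ)} {ε Δ : ℝ} (hε : 0 < ε)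
    (hmod : ∀ x x' y, dist x' x ≤ Δ → f (x, y) ≤ f (x', y) + ε)
    (hkΔ : 2 * ‖f‖ ≤ k * Δ) (hWf : 2 * ‖f‖ ≤ W) :
    pushF fst μ (condKernel hμ hk hW f) ≤ μ f + 2 * ε := by
  -- Test the marginal against the cone with apex at a point almost carrying its value.
  obtain ⟨x, hx⟩ := (isIdemMeasure_pushF fst hμ).exists_dirac_le (condKernel hμ hk hW f) hε
  have h₁ := hx (cone k x)
  have h₂ : fiberSup (condWeight μ k W) f x ≤ μ f + ε - pushF fst μ (cone k x) :=
    ciSup_le fun y => by linarith [add_condWeight_add_le hμ hk hε.le hmod hkΔ hWf x y]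
  simp only [cone_apply, dist_self, mul_zero, neg_zero, add_zero] at h₁
  linarith [show condKernel hμ hk hW f x = fiberSup (condWeight μ k W) f x from rfl]

theorem exists_le_pushF_condKernel (hμ : IsIdemMeasure μ) (f : C(X × Y, ℝ)) {ε : ℝ}
    (hε : 0 < ε) : ∃ k₀, ∀ k (hk : 0 ≤ k), k₀ ≤ k → ∀ W (hW : 0 ≤ W),
      μ f - 3 * ε ≤ pushF fst μ (condKernel hμ hk hW f) := by
  -- The mass of `μ` at `p` bounds the density of the marginal at `p.1` from below, and
  -- steep enough cones at `p.1` approach that density.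
  obtain ⟨p, hp⟩ := hμ.exists_dirac_le f hε
  have hbdd : BddBelow (range fun g : C(X, ℝ) => pushF fst μ g - g p.1) :=
    ⟨μ f - ε - f p, by
      rintro _ ⟨g, rfl⟩
      have h := hp (g.comp fst)
      simp only [comp_apply, fst_apply] at h
      exact (by linarith : μ f - ε - f p ≤ μ (g.comp fst) - g p.1)⟩
  obtain ⟨g, hg⟩ :=
    exists_lt_of_ciInf_lt (lt_add_of_pos_right (⨅ g : C(X, ℝ), pushF fst μ g - g p.1) hε)
  obtain ⟨k₀, hk₀⟩ := (isIdemMeasure_pushF fst hμ).exists_map_cone_le p.1 g hε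
  refine ⟨k₀, fun k hk hkk₀ W hW => ?_⟩
  have hdensity := ciInf_le hbdd (condKernel hμ hk hW f)
  have hw : μ f - ε - f p - pushF fst μ (cone k p.1) ≤ condWeight μ k W p.1 p.2 :=
    le_condWeight hW p.1 fun F => by simpa using (by linarith [hp F] :
      μ f - ε - f p - pushF fst μ (cone k p.1) + F p + pushF fst μ (cone k p.1) ≤ μ F)
  have hT : f p + condWeight μ k W p.1 p.2 ≤ condKernel hμ hk hW f p.1 :=
    le_fiberSup (condWeight_nonpos hW) f p.1 p.2
  linarith [hk₀ k hkk₀]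

theorem exists_abs_pushF_condKernel_sub_le (hμ : IsIdemMeasure μ) (f : C(X × Y, ℝ)) {ε : ℝ}
    (hε : 0 < ε) :
    ∃ k₀, ∀ k (hk : 0 ≤ k), k₀ ≤ k → ∀ W (hW : 0 ≤ W), 2 * ‖f‖ ≤ W →
      |pushF fst μ (condKernel hμ hk hW f) - μ f| ≤ ε := by
  obtain ⟨Δ, hΔ, hf⟩ := Metric.uniformContinuous_iff.1
    (CompactSpace.uniformContinuous_of_continuous f.continuous) (ε / 3) (by positivity)
  have hmod : ∀ x x' y, dist x' x ≤ Δ / 2 → f (x, y) ≤ f (x', y) + ε / 3 := by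
    intro x x' y hd
    have hd' : dist (x, y) (x', y) < Δ := by
      rw [Prod.dist_eq, dist_self, dist_comm]
      exact (max_le hd (half_pos hΔ).le).trans_lt (half_lt_self hΔ)
    linarith [(abs_lt.1 (Real.dist_eq _ _ ▸ hf hd')).2]
  obtain ⟨k₁, hk₁⟩ := exists_le_pushF_condKernel hμ f (ε := ε / 3) (by positivity)
  refine ⟨max k₁ (2 * ‖f‖ / (Δ / 2)), fun k hk hkk₀ W hW hWf =>
    abs_sub_le_iff.2 ⟨?_, ?_⟩⟩
  · have hkΔ : 2 * ‖f‖ ≤ k * (Δ / 2) :=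
      (div_le_iff₀ (by positivity)).1 ((le_max_right _ _).trans hkk₀)
    linarith [pushF_condKernel_le hμ hk hW (by positivity) hmod hkΔ hWf]
  · linarith [hk₁ k hk ((le_max_left _ _).trans hkk₀) W hW]

theorem exists_isMaxPlusKernel_abs_sub_le (hμ : IsIdemMeasure μ) {ι : Type*} [Finite ι]
    (f : ι → C(X × Y, ℝ)) {ε : ℝ} (hε : 0 < ε) :
    ∃ T, IsMaxPlusKernel T ∧ ∀ i, |pushF fst μ (T (f i)) - μ (f i)| ≤ ε := by
  choose k₀ hk₀ using fun i => exists_abs_pushF_condKernel_sub_le hμ (f i) hε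
  obtain ⟨k, hk⟩ := (finite_range k₀).bddAbove
  obtain ⟨W, hW⟩ := (finite_range fun i => 2 * ‖f i‖).bddAbove
  refine ⟨condKernel hμ (le_max_right k 0) (le_max_right W 0),
    isMaxPlusKernel_condKernel hμ _ _, fun i => hk₀ i _ _ ?_ _ _ ?_⟩
  · exact (hk ⟨i, rfl⟩).trans (le_max_left _ _)
  · exact (hW ⟨i, rfl⟩).trans (le_max_left _ _)

end CondKernel

theorem continuous_ciSup_of_locallyFinite {ι Z : Type*} [TopologicalSpace Z] {g : ι → Z → ℝ}
    (hg : ∀ i, Continuous (g i)) (hbdd : ∀ z, BddAbove (range fun i => g i z))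
    {s : ι → Set Z} (hs : LocallyFinite s) (hle : ∀ i j, ∀ z ∉ s i, g i z ≤ g j z) :
    Continuous fun z => ⨆ i, g i z := by
  classical
  rcases isEmpty_or_nonempty ι with hι | ⟨⟨i₀⟩⟩
  · simp only [Real.iSup_of_isEmpty]
    exact continuous_const
  have : Nonempty ι := ⟨i₀⟩
  refine continuous_iff_continuousAt.2 fun z₀ => ?_
  obtain ⟨N, hN, hfin⟩ := hs z₀
  set T := insert i₀ hfin.toFinset
  have hT : T.Nonempty := Finset.insert_nonempty _ _
  have heq : ∀ z ∈ N, T.sup' hT (fun i => g i z) = ⨆ i, g i z := fun z hz => by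
    refine le_antisymm (Finset.sup'_le _ _ fun i _ => le_ciSup (hbdd z) i) (ciSup_le fun i => ?_)
    by_cases hi : i ∈ T
    · exact Finset.le_sup' (fun i => g i z) hi
    · have hzi : z ∉ s i := fun hzi =>
        hi (Finset.mem_insert_of_mem (hfin.mem_toFinset.2 ⟨z, hzi, hz⟩))
      exact (hle i i₀ z hzi).trans (Finset.le_sup' (fun i => g i z) (Finset.mem_insert_self _ _))
  exact (Continuous.finset_sup'_apply hT fun i _ => hg i).continuousAt.congr
    (eventuallyEq_of_mem hN heq)

section Glue

variable {ι Z K : Type*} [TopologicalSpace Z] [TopologicalSpace K]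

/-- The max-plus convex combination of the measures `M i z` with weights
`R * (u i z - 1) ∈ [-R, 0]`. The extra term `-R + B z f`, with `B z` dominating every `M i z`,
absorbs the indices with `u i z = 0`, which makes the supremum locally finite in `z`. -/
noncomputable def maxPlusGlue (u : BumpCovering ι Z) (R : ℝ) (M : ι → Z → C(K, ℝ) → ℝ)
    (B : Z → C(K, ℝ) → ℝ) (z : Z) (f : C(K, ℝ)) : ℝ :=
  ⨆ i, max (R * (u i z - 1) + M i z f) (-R + B z f)

variable {u : BumpCovering ι Z} {R : ℝ} {M : ι → Z → C(K, ℝ) → ℝ}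
  {B : Z → C(K, ℝ) → ℝ}

theorem maxPlusGlue_term_le (hR : 0 ≤ R) (hMB : ∀ i z f, M i z f ≤ B z f) (i : ι) (z : Z)
    (f : C(K, ℝ)) : max (R * (u i z - 1) + M i z f) (-R + B z f) ≤ B z f := by
  have := mul_nonpos_of_nonneg_of_nonpos hR (sub_nonpos.2 (u.le_one i z))
  exact max_le (by linarith [hMB i z f]) (by linarith)

theorem bddAbove_maxPlusGlue (hR : 0 ≤ R) (hMB : ∀ i z f, M i z f ≤ B z f) (z : Z)
    (f : C(K, ℝ)) : BddAbove (range fun i => max (R * (u i z - 1) + M i z f) (-R + B z f)) :=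
  ⟨B z f, by rintro _ ⟨i, rfl⟩; exact maxPlusGlue_term_le hR hMB i z f⟩

theorem maxPlusGlue_eq (hR : 0 ≤ R) (hMB : ∀ i z f, M i z f ≤ B z f) {z : Z} {f : C(K, ℝ)}
    {v : ℝ} (hM : ∀ i, M i z f = v) (hB : B z f = v) : maxPlusGlue u R M B z f = v := by
  have hi := u.ind_apply z (mem_univ z)
  have : Nonempty ι := ⟨u.ind z (mem_univ z)⟩
  refine le_antisymm (ciSup_le fun i => hB ▸ maxPlusGlue_term_le hR hMB i z f) ?_
  refine le_ciSup_of_le (bddAbove_maxPlusGlue hR hMB z f) (u.ind z (mem_univ z)) ?_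
  simp only [hi, hM, sub_self, mul_zero, zero_add, le_max_left]

theorem abs_maxPlusGlue_sub_le (hR : 0 ≤ R) (hMB : ∀ i z f, M i z f ≤ B z f) {z : Z}
    {f : C(K, ℝ)} {c r : ℝ} (hM : ∀ i, u i z ≠ 0 → |M i z f - c| ≤ r)
    (hB : -R + B z f ≤ c + r) :
    |maxPlusGlue u R M B z f - c| ≤ r := by
  have hi := u.ind_apply z (mem_univ z)
  have : Nonempty ι := ⟨u.ind z (mem_univ z)⟩
  refine abs_sub_le_iff.2 ⟨?_, ?_⟩
  · suffices maxPlusGlue u R M B z f ≤ c + r by linarith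
    refine ciSup_le fun i => max_le ?_ hB
    by_cases hu : u i z = 0
    · rw [hu]
      linarith [hMB i z f]
    · linarith [(abs_sub_le_iff.1 (hM i hu)).1,
        mul_nonpos_of_nonneg_of_nonpos hR (sub_nonpos.2 (u.le_one i z))]
  · unfold maxPlusGlue
    have hle := le_ciSup (bddAbove_maxPlusGlue (u := u) hR hMB z f) (u.ind z (mem_univ z))
    have hM' := (abs_sub_le_iff.1 (hM _ (by rw [hi]; exact one_ne_zero))).2
    rw [hi, sub_self, mul_zero, zero_add] at hle
    linarith [le_max_left (M (u.ind z (mem_univ z)) z f) (-R + B z f)]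

theorem isIdemMeasure_maxPlusGlue (hR : 0 ≤ R) (hMB : ∀ i z f, M i z f ≤ B z f) {z : Z}
    (hM : ∀ i, IsIdemMeasure (M i z)) (hB : IsIdemMeasure (B z)) :
    IsIdemMeasure (maxPlusGlue u R M B z) := by
  have : Nonempty ι := ⟨u.ind z (mem_univ z)⟩
  refine ⟨fun c => maxPlusGlue_eq hR hMB (fun i => (hM i).map_const c) (hB.map_const c),
    fun c f => ?_, fun f g => ?_⟩
  · have hterm : ∀ i, max (R * (u i z - 1) + M i z (const K c + f)) (-R + B z (const K c + f)) =
        c + max (R * (u i z - 1) + M i z f) (-R + B z f) := fun i => by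
      rw [(hM i).map_const_add, hB.map_const_add, ← max_add_add_left]
      congr 1 <;> ring
    simp only [maxPlusGlue, hterm]
    exact (add_ciSup (bddAbove_maxPlusGlue (u := u) hR hMB z f) c).symm
  · have hterm : ∀ i, max (R * (u i z - 1) + M i z (f ⊔ g)) (-R + B z (f ⊔ g)) =
        max (max (R * (u i z - 1) + M i z f) (-R + B z f))
          (max (R * (u i z - 1) + M i z g) (-R + B z g)) := fun i => by
      rw [(hM i).map_sup, hB.map_sup, ← max_add_add_left, ← max_add_add_left, max_max_max_comm]
    simp only [maxPlusGlue, hterm]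
    exact ciSup_sup_eq (bddAbove_maxPlusGlue (u := u) hR hMB z f)
      (bddAbove_maxPlusGlue hR hMB z g)

theorem continuous_maxPlusGlue (hR : 0 ≤ R) (hMB : ∀ i z f, M i z f ≤ B z f)
    (hMc : ∀ i f, Continuous fun z => M i z f) (hBc : ∀ f, Continuous fun z => B z f)
    (f : C(K, ℝ)) : Continuous fun z => maxPlusGlue u R M B z f := by
  refine continuous_ciSup_of_locallyFinite (fun i => ?_) (fun z => bddAbove_maxPlusGlue hR hMB z f)
    u.locallyFinite fun i j z hz => ?_
  · exact ((continuous_const.mul ((u i).continuous.sub continuous_const)).add (hMc i f)).max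
      (continuous_const.add (hBc f))
  · rw [Function.notMem_support.1 hz, zero_sub, mul_neg_one,
      max_eq_right (by linarith [hMB i z f])]
    exact le_max_right _ _

end Glue

theorem isOpen_setOf_forall_abs_sub_lt {Z ι : Type*} [TopologicalSpace Z] [Finite ι]
    {h : ι → Z → ℝ} (hh : ∀ i, Continuous (h i)) (c : ι → ℝ) (r : ℝ) :
    IsOpen {z | ∀ i, |h i z - c i| < r} := by
  simp only [ofPred_forall]
  exact isOpen_iInter_of_finite fun i =>
    isOpen_lt ((hh i).sub continuous_const).abs continuous_const

section Lift

variable {X Y Z : Type*} [PseudoMetricSpace X] [PseudoMetricSpace Y] [CompactSpace Y] [Nonempty Y]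
  [TopologicalSpace Z]

def IsIdemLift (ψ : Z → IdemMeasure X) (Φ : Z → IdemMeasure (X × Y)) : Prop :=
  Continuous Φ ∧ ∀ z, pushF fst (Φ z).val = (ψ z).val

theorem exists_isIdemLift_fiberMax {ψ : Z → IdemMeasure X} (hψ : Continuous ψ) :
    ∃ Φ : Z → IdemMeasure (X × Y), IsIdemLift ψ Φ := by
  refine ⟨fun z => ⟨_, isMaxPlusKernel_fiberMax.isIdemMeasure_comp (ψ z).2⟩,
    continuous_idemMeasure_iff.2 fun f => ?_, fun z => isMaxPlusKernel_fiberMax.pushF_fst_comp _⟩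
  exact (continuous_apply (fiberMax f)).comp (continuous_subtype_val.comp hψ)

theorem exists_isIdemLift_maxPlusGlue {ψ : Z → IdemMeasure X} (hψ : Continuous ψ) {ι : Type*}
    (u : BumpCovering ι Z) {R : ℝ} (hR : 0 ≤ R) {M : ι → Z → C(X × Y, ℝ) → ℝ}
    (hM : ∀ i z, IsIdemMeasure (M i z)) (hMψ : ∀ i z, pushF fst (M i z) = (ψ z).val)
    (hMc : ∀ i f, Continuous fun z => M i z f) :
    ∃ Φ, IsIdemLift ψ Φ ∧
      ∀ z, (Φ z).val = maxPlusGlue u R M (fun z f => (ψ z).val (fiberMax f)) z := by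
  have hMB : ∀ i z f, M i z f ≤ (ψ z).val (fiberMax f) := fun i z f =>
    (hM i z).le_fiberMax (hMψ i z) f
  have hψc : ∀ g, Continuous fun z => (ψ z).val g := continuous_idemMeasure_iff.1 hψ
  refine ⟨fun z => ⟨_, isIdemMeasure_maxPlusGlue hR hMB (hM · z)
      (isMaxPlusKernel_fiberMax.isIdemMeasure_comp (ψ z).2)⟩,
    ⟨?_, fun z => funext fun g => ?_⟩, fun z => rfl⟩
  · exact continuous_idemMeasure_iff.2 fun f =>
      continuous_maxPlusGlue hR hMB hMc (fun f => hψc (fiberMax f)) f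
  · exact maxPlusGlue_eq hR hMB (fun i => congrFun (hMψ i z) g)
      (congrFun (isMaxPlusKernel_fiberMax.pushF_fst_comp _) g)

end Lift

section Step

variable {X Y Z : Type*} [PseudoMetricSpace X] [CompactSpace X] [PseudoMetricSpace Y]
  [CompactSpace Y] [Nonempty Y] [TopologicalSpace Z] {A : Set Z} {φ : A → IdemMeasure (X × Y)}
  {ψ : Z → IdemMeasure X}

theorem exists_isMaxPlusKernel_nhds (hφ : Continuous φ)
    (hcomm : ∀ a, pushF fst (φ a).val = (ψ a).val) (hψ : Continuous ψ)
    {Φ : Z → IdemMeasure (X × Y)} (hΦ : Continuous Φ) {ι : Type*} [Finite ι]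
    (f : ι → C(X × Y, ℝ)) {δ : ℝ} (hδ : 0 < δ) (a : A) :
    ∃ T, IsMaxPlusKernel T ∧ ∃ U : Set Z, IsOpen U ∧ (a : Z) ∈ U ∧
      (∀ z ∈ U, ∀ i, |(ψ z).val (T (f i)) - (φ a).val (f i)| < δ ∧
        |(Φ z).val (f i) - (Φ a).val (f i)| < δ) ∧
      ∀ b : A, (b : Z) ∈ U → ∀ i, |(φ b).val (f i) - (φ a).val (f i)| < δ := by
  obtain ⟨T, hT, hTa⟩ := exists_isMaxPlusKernel_abs_sub_le (φ a).2 f (half_pos hδ)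
  rw [hcomm a] at hTa
  have hφc := continuous_idemMeasure_iff.1 hφ
  have hψc := continuous_idemMeasure_iff.1 hψ
  have hΦc := continuous_idemMeasure_iff.1 hΦ
  obtain ⟨V, hVo, hV⟩ := isOpen_induced_iff.1
    (isOpen_setOf_forall_abs_sub_lt (fun i => hφc (f i)) (fun i => (φ a).val (f i)) δ)
  refine ⟨T, hT, V ∩ {z | ∀ i, |(ψ z).val (T (f i)) - (φ a).val (f i)| < δ} ∩
      {z | ∀ i, |(Φ z).val (f i) - (Φ a).val (f i)| < δ}, ?_, ⟨⟨?_, ?_⟩, ?_⟩,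
    fun z hz i => ⟨hz.1.2 i, hz.2 i⟩, fun b hb => ?_⟩
  · exact (hVo.inter (isOpen_setOf_forall_abs_sub_lt (fun i => hψc _) _ δ)).inter
      (isOpen_setOf_forall_abs_sub_lt (fun i => hΦc _) _ δ)
  · change a ∈ Subtype.val ⁻¹' V
    rw [hV]
    intro i
    simpa using hδ
  · exact fun i => (hTa i).trans_lt (half_lt_self hδ)
  · intro i
    simpa using hδ
  · have : b ∈ Subtype.val ⁻¹' V := hb.1.1
    rwa [hV] at this

theorem exists_isIdemLift_glue [ParacompactSpace Z] [T2Space Z] (hA : IsClosed A)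
    (hψ : Continuous ψ) {Φ : Z → IdemMeasure (X × Y)} (hΦ : IsIdemLift ψ Φ)
    {T : A → C(X × Y, ℝ) → C(X, ℝ)} (hT : ∀ a, IsMaxPlusKernel (T a)) {U : A → Set Z}
    (hUo : ∀ a, IsOpen (U a)) (haU : ∀ a, (a : Z) ∈ U a) {R : ℝ} (hR : 0 ≤ R) :
    ∃ Φ', IsIdemLift ψ Φ' ∧
      ∀ z f {c r : ℝ}, 2 * ‖f‖ ≤ R → -‖f‖ ≤ c → 0 ≤ r →
        (z ∉ A → |(Φ z).val f - c| ≤ r) →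
        (∀ a, z ∈ U a → |(ψ z).val (T a f) - c| ≤ r) → |(Φ' z).val f - c| ≤ r := by
  obtain ⟨u, hu⟩ := BumpCovering.exists_isSubordinate isClosed_univ
    (fun o : Option A => o.elim Aᶜ U) (by rintro (_ | a); exacts [hA.isOpen_compl, hUo a])
    fun z _ => by
      by_cases hz : z ∈ A
      exacts [mem_iUnion.2 ⟨some ⟨z, hz⟩, haU _⟩, mem_iUnion.2 ⟨none, hz⟩]
  let M : Option A → Z → C(X × Y, ℝ) → ℝ :=
    fun o z f => o.elim ((Φ z).val f) fun a => (ψ z).val (T a f)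
  have hM : ∀ o z, IsIdemMeasure (M o z) := by
    rintro (_ | a) z
    exacts [(Φ z).2, (hT a).isIdemMeasure_comp (ψ z).2]
  have hMψ : ∀ o z, pushF fst (M o z) = (ψ z).val := by
    rintro (_ | a) z
    exacts [hΦ.2 z, (hT a).pushF_fst_comp _]
  have hMc : ∀ o f, Continuous fun z => M o z f := by
    rintro (_ | a) f
    exacts [continuous_idemMeasure_iff.1 hΦ.1 f, continuous_idemMeasure_iff.1 hψ (T a f)]
  obtain ⟨Φ', hΦ', hval⟩ := exists_isIdemLift_maxPlusGlue hψ u hR hM hMψ hMc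
  refine ⟨Φ', hΦ', fun z f c r hfR hc hr hΦc hTc => ?_⟩
  rw [hval]
  refine abs_maxPlusGlue_sub_le hR (fun o z f => (hM o z).le_fiberMax (hMψ o z) f)
    (fun o ho => ?_) ?_
  · rcases o with _ | a
    exacts [hΦc (hu none (subset_tsupport _ ho)), hTc a (hu (some a) (subset_tsupport _ ho))]
  · have := (abs_le.1 ((isMaxPlusKernel_fiberMax.isIdemMeasure_comp (ψ z).2).abs_le_norm f)).2
    linarith

theorem exists_isIdemLift_approx [ParacompactSpace Z] [T2Space Z] (hA : IsClosed A)
    (hφ : Continuous φ) (hcomm : ∀ a, pushF fst (φ a).val = (ψ a).val) (hψ : Continuous ψ)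
    {Φ : Z → IdemMeasure (X × Y)} (hΦ : IsIdemLift ψ Φ) {ι : Type*} [Finite ι]
    (f : ι → C(X × Y, ℝ)) {e : ι → ℝ} (he₀ : ∀ i, 0 ≤ e i)
    (he : ∀ (a : A) i, |(Φ a).val (f i) - (φ a).val (f i)| ≤ e i) {δ : ℝ} (hδ : 0 < δ) :
    ∃ Φ', IsIdemLift ψ Φ' ∧
      (∀ (a : A) i, |(Φ' a).val (f i) - (φ a).val (f i)| ≤ δ) ∧
      ∀ z i, |(Φ' z).val (f i) - (Φ z).val (f i)| ≤ e i + δ := by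
  choose T hT U hUo haU hU hUA using
    exists_isMaxPlusKernel_nhds hφ hcomm hψ hΦ.1 f (half_pos hδ)
  obtain ⟨R, hR⟩ := (finite_range fun i => 2 * ‖f i‖).bddAbove
  obtain ⟨Φ', hΦ', hglue⟩ := exists_isIdemLift_glue hA hψ hΦ hT hUo haU (le_max_right R 0)
  have hfR : ∀ i, 2 * ‖f i‖ ≤ max R 0 := fun i => (hR ⟨i, rfl⟩).trans (le_max_left R 0)
  refine ⟨Φ', hΦ', fun a i => ?_, fun z i => ?_⟩
  · refine hglue a (f i) (hfR i) (abs_le.1 ((φ a).2.abs_le_norm (f i))).1 hδ.le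
      (fun ha => absurd a.2 ha) fun b hb => ?_
    have h₁ := (hU b a hb i).1
    have h₂ := hUA b a hb i
    rw [abs_sub_comm] at h₂
    linarith [abs_sub_le ((ψ a).val (T b (f i))) ((φ b).val (f i)) ((φ a).val (f i))]
  · refine hglue z (f i) (hfR i) (abs_le.1 ((Φ z).2.abs_le_norm (f i))).1
      (by linarith [he₀ i]) (fun _ => by simp only [sub_self, abs_zero]; linarith [he₀ i])
      fun b hb => ?_
    obtain ⟨h₁, h₂⟩ := hU b z hb i
    have h₃ := he b i
    rw [abs_sub_comm] at h₂ h₃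
    linarith [abs_sub_le ((ψ z).val (T b (f i))) ((φ b).val (f i)) ((Φ b).val (f i)),
      abs_sub_le ((ψ z).val (T b (f i))) ((Φ b).val (f i)) ((Φ z).val (f i))]

end Step

section Limit

variable {K Z : Type*} [TopologicalSpace K] [CompactSpace K]

theorem abs_sub_le_of_abs_succ_sub_le {a : ℕ → ℝ} {n₀ : ℕ} {C : ℝ}
    (h : ∀ n ≥ n₀, |a (n + 1) - a n| ≤ C * (1 / 2) ^ n) {n n' : ℕ} (hn : n₀ ≤ n)
    (hn' : n ≤ n') : |a n' - a n| ≤ 2 * C * (1 / 2) ^ n := by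
  suffices |a n' - a n| ≤ 2 * C * ((1 / 2) ^ n - (1 / 2) ^ n') by
    have hC : 0 ≤ C := nonneg_of_mul_nonneg_left ((abs_nonneg _).trans (h n₀ le_rfl))
      (by positivity)
    nlinarith [pow_pos (one_half_pos (α := ℝ)) n']
  induction n', hn' using Nat.le_induction with
  | base => simp
  | succ n' hn' ih =>
    have := abs_sub_le (a (n' + 1)) (a n') (a n)
    have := h n' (hn.trans hn')
    rw [pow_succ]
    linarith

theorem uniformCauchySeqOn_of_denseRange {Φ : ℕ → Z → IdemMeasure K} {F : ℕ → C(K, ℝ)}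
    (hF : DenseRange F)
    (hstep : ∀ n z, ∀ m < n,
      |(Φ (n + 1) z).val (F m) - (Φ n z).val (F m)| ≤ 2 * (1 / 2) ^ n)
    (f : C(K, ℝ)) : UniformCauchySeqOn (fun n z => (Φ n z).val f) atTop univ := by
  refine Metric.uniformCauchySeqOn_iff.2 fun ε hε => ?_
  obtain ⟨m, hm⟩ := Metric.denseRange_iff.1 hF f (ε / 4) (by positivity)
  obtain ⟨N, hN⟩ := exists_pow_lt_of_lt_one (show 0 < ε / 16 by positivity) one_half_lt_one
  have hFm : ∀ n z, |(Φ n z).val f - (Φ n z).val (F m)| < ε / 4 := fun n z =>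
    ((Φ n z).2.abs_sub_le_norm_sub f (F m)).trans_lt (by rwa [← dist_eq_norm])
  have hpow := pow_le_pow_of_le_one (a := (1 / 2 : ℝ)) (by norm_num) one_half_lt_one.le
    (le_max_right (m + 1) N)
  have htel : ∀ z, ∀ n ≥ max (m + 1) N,
      |(Φ n z).val (F m) - (Φ (max (m + 1) N) z).val (F m)| ≤ 4 * (1 / 2) ^ N := by
    intro z n hn
    have := abs_sub_le_of_abs_succ_sub_le (a := fun n => (Φ n z).val (F m)) (n₀ := m + 1)
      (fun n hn => hstep n z m hn) (le_max_left _ _) hn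
    linarith
  refine ⟨max (m + 1) N, fun n hn n' hn' z _ => ?_⟩
  have h₁ := abs_lt.1 (hFm n z)
  have h₂ := abs_lt.1 (hFm n' z)
  have h₃ := abs_le.1 (htel z n hn)
  have h₄ := abs_le.1 (htel z n' hn')
  rw [Real.dist_eq, abs_lt]
  constructor <;> linarith

theorem exists_tendsto_of_denseRange [TopologicalSpace Z] {Φ : ℕ → Z → IdemMeasure K}
    (hΦ : ∀ n, Continuous (Φ n)) {F : ℕ → C(K, ℝ)} (hF : DenseRange F)
    (hstep : ∀ n z, ∀ m < n,
      |(Φ (n + 1) z).val (F m) - (Φ n z).val (F m)| ≤ 2 * (1 / 2) ^ n) :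
    ∃ Ψ : Z → IdemMeasure K, Continuous Ψ ∧
      ∀ z f, Tendsto (fun n => (Φ n z).val f) atTop (𝓝 ((Ψ z).val f)) := by
  have hcauchy := uniformCauchySeqOn_of_denseRange hF hstep
  choose L hL using fun z f => cauchySeq_tendsto_of_complete ((hcauchy f).cauchySeq (mem_univ z))
  refine ⟨fun z => ⟨L z, isIdemMeasure_of_tendsto (fun n => (Φ n z).2) (hL z)⟩,
    continuous_idemMeasure_iff.2 fun f => ?_, hL⟩
  exact (tendstoUniformlyOn_univ.1 ((hcauchy f).tendstoUniformlyOn_of_tendsto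
    fun z _ => hL z f)).continuous (Frequently.of_forall fun n =>
      continuous_idemMeasure_iff.1 (hΦ n) f)

end Limit

theorem exists_seq_isIdemLift {X Y Z : Type*} [PseudoMetricSpace X] [CompactSpace X]
    [PseudoMetricSpace Y] [CompactSpace Y] [Nonempty Y] [TopologicalSpace Z] [ParacompactSpace Z]
    [T2Space Z] {A : Set Z} (hA : IsClosed A) {φ : A → IdemMeasure (X × Y)}
    (hφ : Continuous φ) {ψ : Z → IdemMeasure X}
    (hcomm : ∀ a, pushF fst (φ a).val = (ψ a).val) (hψ : Continuous ψ)
    (F : ℕ → C(X × Y, ℝ)) :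
    ∃ Φ : ℕ → Z → IdemMeasure (X × Y), (∀ n, IsIdemLift ψ (Φ n)) ∧
      (∀ n (a : A), ∀ m < n, |(Φ n a).val (F m) - (φ a).val (F m)| ≤ (1 / 2) ^ n) ∧
      ∀ n z, ∀ m < n, |(Φ (n + 1) z).val (F m) - (Φ n z).val (F m)| ≤ 2 * (1 / 2) ^ n := by
  let P : ℕ → (Z → IdemMeasure (X × Y)) → Prop := fun n Φ => IsIdemLift ψ Φ ∧
    ∀ a : A, ∀ m < n, |(Φ a).val (F m) - (φ a).val (F m)| ≤ (1 / 2) ^ n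
  have hstep : ∀ n Φ, P n Φ → ∃ Φ', P (n + 1) Φ' ∧
      ∀ z, ∀ m < n, |(Φ' z).val (F m) - (Φ z).val (F m)| ≤ 2 * (1 / 2) ^ n := by
    rintro n Φ ⟨hΦ, hΦφ⟩
    -- The new test function `F n` only satisfies the trivial tolerance `2 * ‖F n‖`.
    obtain ⟨Φ', hΦ', hφ', hclose⟩ := exists_isIdemLift_approx hA hφ hcomm hψ hΦ
      (fun m : Fin (n + 1) => F m)
      (e := fun m => if (m : ℕ) < n then (1 / 2) ^ n else 2 * ‖F m‖)
      (fun m => by split_ifs <;> positivity) (fun a m => by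
        split_ifs with hm
        · exact hΦφ a m hm
        · have := abs_sub ((Φ a).val (F m)) ((φ a).val (F m))
          linarith [(Φ a).2.abs_le_norm (F m), (φ a).2.abs_le_norm (F m)])
      (δ := (1 / 2) ^ (n + 1)) (by positivity)
    refine ⟨Φ', ⟨hΦ', fun a m hm => hφ' a ⟨m, hm⟩⟩, fun z m hm => ?_⟩
    have := hclose z ⟨m, by omega⟩
    simp only [hm, if_true, pow_succ] at this
    linarith [pow_pos (one_half_pos (α := ℝ)) n]
  choose next hnext hclose using hstep
  obtain ⟨Φ₀, hΦ₀⟩ := exists_isIdemLift_fiberMax (Y := Y) hψ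
  let seq : ∀ n, {Φ // P n Φ} := fun n =>
    Nat.rec ⟨Φ₀, hΦ₀, fun _ _ h => absurd h (Nat.not_lt_zero _)⟩
      (fun n Φ => ⟨next n Φ.1 Φ.2, hnext n Φ.1 Φ.2⟩) n
  exact ⟨fun n => (seq n).1, fun n => (seq n).2.1, fun n => (seq n).2.2,
    fun n => hclose n (seq n).1 (seq n).2⟩

theorem statement13_general {X Y : Type*}
    [TopologicalSpace X] [CompactSpace X] [TopologicalSpace.MetrizableSpace X]
    [TopologicalSpace Y] [CompactSpace Y] [TopologicalSpace.MetrizableSpace Y] [Nonempty Y]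
    {Z : Type*} [TopologicalSpace Z] [ParacompactSpace Z] [T2Space Z]
    (A : Set Z) (hA : IsClosed A)
    (φ : A → IdemMeasure (X × Y)) (hφ : Continuous φ)
    (ψ : Z → IdemMeasure X) (hψ : Continuous ψ)
    (hcomm : ∀ a : A, pushF ⟨Prod.fst, continuous_fst⟩ (φ a).val = (ψ a).val) :
    ∃ Φ : Z → IdemMeasure (X × Y), Continuous Φ ∧
      (∀ z : Z, pushF ⟨Prod.fst, continuous_fst⟩ (Φ z).val = (ψ z).val) ∧
      (∀ a : A, Φ a = φ a) := by
  let _ := TopologicalSpace.metrizableSpaceMetric X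
  let _ := TopologicalSpace.metrizableSpaceMetric Y
  obtain ⟨F, hF⟩ := TopologicalSpace.exists_dense_seq C(X × Y, ℝ)
  obtain ⟨Φ, hlift, hφΦ, hstep⟩ := exists_seq_isIdemLift hA hφ hcomm hψ F
  obtain ⟨Ψ, hΨ, hlim⟩ := exists_tendsto_of_denseRange (fun n => (hlift n).1) hF hstep
  refine ⟨Ψ, hΨ, fun z => funext fun g => ?_, fun a => Subtype.ext ?_⟩
  · exact tendsto_nhds_unique (hlim z (g.comp fst))
      (tendsto_const_nhds.congr fun n => (congrFun ((hlift n).2 z) g).symm)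
  · refine (Ψ a).2.ext_of_denseRange (φ a).2 hF fun m => tendsto_nhds_unique (hlim a (F m)) ?_
    refine tendsto_iff_dist_tendsto_zero.2 (squeeze_zero' (Eventually.of_forall fun _ =>
      dist_nonneg) ?_ (tendsto_pow_atTop_nhds_zero_of_lt_one (by norm_num) one_half_lt_one))
    exact eventually_atTop.2 ⟨m + 1, fun n hn => (Real.dist_eq _ _).trans_le (hφΦ n a m hn)⟩

/-- For nonempty compact metrizable `X`, `Y`, the map
`I(p₁) : I(X × Y) → I(X)` induced by the projection `p₁ : X × Y → X` is soft: every partial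
lifting of a map from a paracompact Hausdorff space `Z` given on a closed subset `A ⊆ Z`
extends to a global lifting. -/
theorem statement13 {X Y : Type*}
    [TopologicalSpace X] [CompactSpace X] [TopologicalSpace.MetrizableSpace X] [Nonempty X]
    [TopologicalSpace Y] [CompactSpace Y] [TopologicalSpace.MetrizableSpace Y] [Nonempty Y]
    {Z : Type*} [TopologicalSpace Z] [ParacompactSpace Z] [T2Space Z]
    (A : Set Z) (hA : IsClosed A)
    (φ : A → IdemMeasure (X × Y)) (hφ : Continuous φ)
    (ψ : Z → IdemMeasure X) (hψ : Continuous ψ)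
    (hcomm : ∀ a : A, pushF ⟨Prod.fst, continuous_fst⟩ (φ a).val = (ψ a).val) :
    ∃ Φ : Z → IdemMeasure (X × Y), Continuous Φ ∧
      (∀ z : Z, pushF ⟨Prod.fst, continuous_fst⟩ (Φ z).val = (ψ z).val) ∧
      (∀ a : A, Φ a = φ a) :=
  statement13_general A hA φ hφ ψ hψ hcomm
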